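/- arXiv:2202.02448 — 2 statements merged into one kernel-verified Lean document; each statement's English description precedes it below -/
import Mathlib

section
/- Let X ∈ ℝ^{n×p} with XᵀX invertible, Y ∈ ℝ^{n×q}, A an n×n orthogonal matrix, B an invertible p×p matrix, and C an invertible q×q matrix. Define X* = A X B and Y* = A Y C. Then the least-squares estimate computed from the encrypted data satisfies ((X*)ᵀX*)⁻¹ (X*)ᵀ Y* = B⁻¹ ((XᵀX)⁻¹ Xᵀ Y) C. -/
open Matrix

theorem stmt_1 {n p q : ℕ} (X : Matrix (Fin n) (Fin p) ℝ) (Y : Matrix (Fin n) (Fin q) ℝ)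
    (A : Matrix (Fin n) (Fin n) ℝ) (B : Matrix (Fin p) (Fin p) ℝ) (C : Matrix (Fin q) (Fin q) ℝ)
    (hX : IsUnit (Xᵀ * X)) (hA : Aᵀ * A = 1) (hB : IsUnit B) (hC : IsUnit C) :
    ((A * X * B)ᵀ * (A * X * B))⁻¹ * (A * X * B)ᵀ * (A * Y * C) =
      B⁻¹ * ((Xᵀ * X)⁻¹ * Xᵀ * Y) * C := by
  have hBd : IsUnit B.det := (Matrix.isUnit_iff_isUnit_det B).mp hB
  have hBT : (Bᵀ)⁻¹ * Bᵀ = 1 := Matrix.nonsing_inv_mul _ (by simpa using hBd)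
  have key : (A * X * B)ᵀ * (A * X * B) = Bᵀ * (Xᵀ * X) * B := by
    have : Xᵀ * (Aᵀ * (A * (X * B))) = Xᵀ * (X * B) := by
      rw [← Matrix.mul_assoc Aᵀ A, hA, Matrix.one_mul]
    simp only [Matrix.transpose_mul, Matrix.mul_assoc, this]
  rw [key, Matrix.mul_inv_rev, Matrix.mul_inv_rev]
  have h2 : (A * X * B)ᵀ = Bᵀ * (Xᵀ * Aᵀ) := by
    simp [Matrix.transpose_mul, Matrix.mul_assoc]
  rw [h2]
  calc B⁻¹ * ((Xᵀ * X)⁻¹ * (Bᵀ)⁻¹) * (Bᵀ * (Xᵀ * Aᵀ)) * (A * Y * C)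
      = B⁻¹ * ((Xᵀ * X)⁻¹ * (((Bᵀ)⁻¹ * Bᵀ) * (Xᵀ * (Aᵀ * A * (Y * C))))) := by
        simp only [Matrix.mul_assoc]
    _ = B⁻¹ * ((Xᵀ * X)⁻¹ * Xᵀ * Y) * C := by
        rw [hBT, hA]
        simp only [Matrix.one_mul, Matrix.mul_assoc]
end

section
/- Let X ∈ ℝ^{n×p}, Y ∈ ℝ^{n×q}, λ > 0, A orthogonal n×n, B invertible p×p, C invertible q×q. With X* = A X B and Y* = A Y C, the encrypted ridge estimate satisfies ((X*)ᵀX* + λ BᵀB)⁻¹ (X*)ᵀ Y* = B⁻¹ (XᵀX + λ I)⁻¹ Xᵀ Y C. -/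
open Matrix

theorem stmt_2 {n p q : ℕ} (X : Matrix (Fin n) (Fin p) ℝ) (Y : Matrix (Fin n) (Fin q) ℝ)
    (A : Matrix (Fin n) (Fin n) ℝ) (B : Matrix (Fin p) (Fin p) ℝ) (C : Matrix (Fin q) (Fin q) ℝ)
    (lam : ℝ) (hlam : 0 < lam)
    (hA : Aᵀ * A = 1) (hB : IsUnit B) (hC : IsUnit C) :
    ((A * X * B)ᵀ * (A * X * B) + lam • (Bᵀ * B))⁻¹ * (A * X * B)ᵀ * (A * Y * C) =
      B⁻¹ * (Xᵀ * X + lam • (1 : Matrix (Fin p) (Fin p) ℝ))⁻¹ * Xᵀ * Y * C := by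
  set M : Matrix (Fin p) (Fin p) ℝ := Xᵀ * X + lam • (1 : Matrix (Fin p) (Fin p) ℝ) with hM
  have hMpd : M.PosDef := by
    apply Matrix.PosDef.posSemidef_add
    · have := Matrix.posSemidef_conjTranspose_mul_self X
      simpa [Matrix.conjTranspose_eq_transpose_of_trivial] using this
    · rw [Matrix.smul_one_eq_diagonal]
      exact Matrix.posDef_diagonal_iff.2 fun _ => hlam
  have hAA : ∀ {k : ℕ} (Z : Matrix (Fin n) (Fin k) ℝ), Aᵀ * (A * Z) = Z := by
    intro k Z; rw [← Matrix.mul_assoc, hA, Matrix.one_mul]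
  have hBT : IsUnit Bᵀ := (Matrix.isUnit_iff_isUnit_det _).2 (by
    rw [Matrix.det_transpose]; exact (Matrix.isUnit_iff_isUnit_det _).1 hB)
  have hBB : ∀ {k : ℕ} (Z : Matrix (Fin p) (Fin k) ℝ), Bᵀ⁻¹ * (Bᵀ * Z) = Z := by
    intro k Z
    rw [← Matrix.mul_assoc, Matrix.nonsing_inv_mul _ ((Matrix.isUnit_iff_isUnit_det _).1 hBT),
      Matrix.one_mul]
  have key : (A * X * B)ᵀ * (A * X * B) + lam • (Bᵀ * B) = Bᵀ * (M * B) := by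
    simp only [Matrix.transpose_mul, Matrix.mul_assoc, hAA, hM, Matrix.add_mul, Matrix.mul_add,
      Matrix.smul_mul, Matrix.mul_smul, Matrix.one_mul]
  rw [key, Matrix.mul_inv_rev, Matrix.mul_inv_rev]
  simp only [Matrix.transpose_mul, Matrix.mul_assoc, hAA, hBB]
end
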